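/- arXiv:2603.12576 — 6 statements merged into one kernel-verified Lean document; each statement's English description precedes it below -/
import Mathlib

section
/- Let P₁ and P₂ be probability measures on ℝ whose difference of CDFs H(x) = F_{P₁}(x) − F_{P₂}(x) is Lebesgue-integrable on ℝ. Then for every ω ≠ 0, ∫_ℝ H(x) e^{−iωx} dx = (φ_{P₁}(−ω) − φ_{P₂}(−ω)) / (iω). Equivalently, with the symmetric Fourier convention, Ĥ(ω) = (φ_{P₁}(−ω) − φ_{P₂}(−ω)) / (iω√(2π)). -/
open MeasureTheory Filter

/-- The cumulative distribution function of a measure on `ℝ`. -/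
noncomputable def cdfFn (P : Measure ℝ) (x : ℝ) : ℝ := (P (Set.Iic x)).toReal

/-- The characteristic function `φ_P(ω) = ∫ e^{iωx} dP(x)`. -/
noncomputable def charFn (P : Measure ℝ) (ω : ℝ) : ℂ :=
  ∫ x, Complex.exp (Complex.I * (ω : ℂ) * (x : ℂ)) ∂P

/-!
On a bounded interval, Fubini over the triangle `a < t ≤ x ≤ b` gives the Stieltjes integration
by parts formula `∫_a^b F_P g' = F_P(b) g(b) - F_P(a) g(a) - ∫_{(a,b]} g dP`. Taking
`g(x) = e^{-iωx} / (-iω)` and subtracting the formulas for `P₁` and `P₂` on `[-r, r]`, the boundary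
terms `H(±r) g(±r)` vanish as `r → ∞` because `H → 0` at `±∞` and `g` is bounded, while
`∫_{(-r,r]} g dPᵢ` tends to `φ_{Pᵢ}(-ω) / (-iω)`.
-/

open Set Topology ProbabilityTheory

section IntegrationByParts

variable {E : Type*} [NormedAddCommGroup E] [NormedSpace ℝ E]
  (P : Measure ℝ) [IsFiniteMeasure P] {g g' : ℝ → E} {a b : ℝ}

theorem intervalIntegrable_measureReal_smul {s : ℝ → Set ℝ} (hs : Monotone s)
    (hg' : IntervalIntegrable g' volume a b) :
    IntervalIntegrable (fun x => P.real (s x) • g' x) volume a b := by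
  have hmeas : Measurable fun x => P.real (s x) :=
    (show Monotone fun x => P.real (s x) from fun _ _ h => measureReal_mono (hs h)).measurable
  have hbdd : ∀ x, ‖P.real (s x)‖ ≤ P.real univ := fun x => by
    rw [Real.norm_of_nonneg measureReal_nonneg]; exact measureReal_mono (subset_univ _)
  exact ⟨hg'.1.bdd_smul _ hmeas.aestronglyMeasurable (ae_of_all _ hbdd),
    hg'.2.bdd_smul _ hmeas.aestronglyMeasurable (ae_of_all _ hbdd)⟩

variable [CompleteSpace E]

theorem intervalIntegral_measureReal_Ioc_smul_deriv (hab : a ≤ b)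
    (hg : ∀ x ∈ Icc a b, HasDerivAt g (g' x) x) (hg' : IntervalIntegrable g' volume a b) :
    ∫ x in a..b, P.real (Ioc a x) • g' x = ∫ t in a..b, (g b - g t) ∂P := by
  set f : ℝ → ℝ → E := fun x t => (Ici t).indicator g' x
  have hf : Integrable (Function.uncurry f)
      ((volume.restrict (Ioc a b)).prod (P.restrict (Ioc a b))) := by
    have : Function.uncurry f = {p : ℝ × ℝ | p.2 ≤ p.1}.indicator (fun p => g' p.1) := by
      ext p; simp [f, indicator, Function.uncurry]
    rw [this]
    exact (((intervalIntegrable_iff_integrableOn_Ioc_of_le hab).1 hg').comp_fst _).indicator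
      (measurableSet_le measurable_snd measurable_fst)
  have inner_P : ∀ x ∈ Ioc a b, ∫ t in Ioc a b, f x t ∂P = P.real (Ioc a x) • g' x := by
    intro x hx
    have : Iic x ∩ Ioc a b = Ioc a x := by
      ext t; simp only [mem_inter_iff, mem_Iic, mem_Ioc] at hx ⊢; grind
    change ∫ t in Ioc a b, (Iic x).indicator (fun _ => g' x) t ∂P = _
    rw [integral_indicator_const _ measurableSet_Iic,
      measureReal_restrict_apply measurableSet_Iic, this]
  have inner_vol : ∀ t ∈ Ioc a b, ∫ x in Ioc a b, f x t = g b - g t := by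
    intro t ht
    have : Ici t ∩ Ioc a b = Icc t b := by
      ext x; simp only [mem_inter_iff, mem_Ici, mem_Ioc, mem_Icc, mem_Ioc] at ht ⊢; grind
    rw [integral_indicator measurableSet_Ici, Measure.restrict_restrict measurableSet_Ici, this,
      integral_Icc_eq_integral_Ioc, ← intervalIntegral.integral_of_le ht.2]
    exact intervalIntegral.integral_eq_sub_of_hasDerivAt
      (fun x hx => hg x (by rw [uIcc_of_le ht.2] at hx; exact ⟨ht.1.le.trans hx.1, hx.2⟩))
      (hg'.mono_set (by rw [uIcc_of_le ht.2, uIcc_of_le hab]; exact Icc_subset_Icc ht.1.le le_rfl))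
  rw [intervalIntegral.integral_of_le hab, intervalIntegral.integral_of_le hab,
    ← setIntegral_congr_fun measurableSet_Ioc inner_P, integral_integral_swap hf]
  exact setIntegral_congr_fun measurableSet_Ioc inner_vol

theorem intervalIntegral_measureReal_Iic_smul_deriv (hab : a ≤ b)
    (hg : ∀ x ∈ Icc a b, HasDerivAt g (g' x) x) (hg' : IntervalIntegrable g' volume a b) :
    ∫ x in a..b, P.real (Iic x) • g' x
      = P.real (Iic b) • g b - P.real (Iic a) • g a - ∫ t in a..b, g t ∂P := by
  have hIic : ∀ x, a ≤ x → P.real (Iic x) = P.real (Iic a) + P.real (Ioc a x) := fun x hx => by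
    rw [← measureReal_union (Iic_disjoint_Ioc le_rfl) measurableSet_Ioc, Iic_union_Ioc_eq_Iic hx]
  have hgP : IntervalIntegrable g P a b := ContinuousOn.intervalIntegrable fun x hx =>
    (hg x (by rwa [uIcc_of_le hab] at hx)).continuousAt.continuousWithinAt
  have hconst : IntervalIntegrable (fun x => P.real (Iic a) • g' x) volume a b := hg'.smul _
  calc ∫ x in a..b, P.real (Iic x) • g' x
      = ∫ x in a..b, (P.real (Iic a) • g' x + P.real (Ioc a x) • g' x) := by
        refine intervalIntegral.integral_congr fun x hx => ?_
        rw [uIcc_of_le hab] at hx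
        rw [hIic x hx.1, add_smul]
    _ = P.real (Iic a) • (g b - g a) + ∫ t in a..b, (g b - g t) ∂P := by
        rw [intervalIntegral.integral_add hconst
          (intervalIntegrable_measureReal_smul P (fun _ _ h => Ioc_subset_Ioc_right h) hg'),
          intervalIntegral.integral_smul, intervalIntegral.integral_eq_sub_of_hasDerivAt
            (fun x hx => hg x (by rwa [uIcc_of_le hab] at hx)) hg',
          intervalIntegral_measureReal_Ioc_smul_deriv P hab hg hg']
    _ = P.real (Iic b) • g b - P.real (Iic a) • g a - ∫ t in a..b, g t ∂P := by
        rw [intervalIntegral.integral_sub intervalIntegrable_const hgP,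
          intervalIntegral.integral_const', Ioc_eq_empty (not_lt.2 hab), measureReal_empty,
          sub_zero, hIic b hab, add_smul, smul_sub]
        abel

theorem integral_cdf_sub_cdf_smul_deriv (P₁ P₂ : Measure ℝ) [IsProbabilityMeasure P₁]
    [IsProbabilityMeasure P₂] (hg : ∀ x, HasDerivAt g (g' x) x) (hg' : Continuous g')
    {C : ℝ} (hC : ∀ x, ‖g x‖ ≤ C) (hint : Integrable fun x => (cdf P₁ x - cdf P₂ x) • g' x) :
    ∫ x, (cdf P₁ x - cdf P₂ x) • g' x = ∫ x, g x ∂P₂ - ∫ x, g x ∂P₁ := by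
  set H : ℝ → ℝ := fun x => cdf P₁ x - cdf P₂ x
  have hgC : ∀ l : Filter ℝ, IsBoundedUnder (· ≤ ·) l (norm ∘ g) := fun _ =>
    isBoundedUnder_of ⟨C, hC⟩
  have hH_top : Tendsto (fun r => H r • g r) atTop (𝓝 0) := by
    refine Tendsto.zero_smul_isBoundedUnder_le ?_ (hgC _)
    simpa using (tendsto_cdf_atTop P₁).sub (tendsto_cdf_atTop P₂)
  have hH_bot : Tendsto (fun r => H (-r) • g (-r)) atTop (𝓝 0) := by
    refine (Tendsto.zero_smul_isBoundedUnder_le ?_ (hgC _)).comp tendsto_neg_atTop_atBot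
    simpa using (tendsto_cdf_atBot P₁).sub (tendsto_cdf_atBot P₂)
  have hg_int : ∀ (P : Measure ℝ) [IsFiniteMeasure P], Integrable g P := fun P _ =>
    .of_bound (continuous_iff_continuousAt.2 fun x => (hg x).continuousAt).aestronglyMeasurable
      C (ae_of_all _ hC)
  have hg_lim : ∀ (P : Measure ℝ) [IsFiniteMeasure P],
      Tendsto (fun r => ∫ t in -r..r, g t ∂P) atTop (𝓝 (∫ t, g t ∂P)) := fun P _ =>
    intervalIntegral_tendsto_integral (hg_int P) tendsto_neg_atTop_atBot tendsto_id
  have hparts : ∀ᶠ r in atTop, ∫ x in -r..r, H x • g' x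
      = H r • g r - H (-r) • g (-r) - (∫ t in -r..r, g t ∂P₁ - ∫ t in -r..r, g t ∂P₂) := by
    filter_upwards [eventually_ge_atTop 0] with r hr
    have hr' : -r ≤ r := by linarith
    have hcdf : ∀ (P : Measure ℝ) [IsProbabilityMeasure P],
        IntervalIntegrable (fun x => cdf P x • g' x) volume (-r) r := fun P _ => by
      simpa only [cdf_eq_real] using intervalIntegrable_measureReal_smul P
        (fun _ _ h => Iic_subset_Iic.2 h) (hg'.intervalIntegrable (-r) r)
    simp only [H, sub_smul]
    rw [intervalIntegral.integral_sub (hcdf P₁) (hcdf P₂)]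
    simp only [cdf_eq_real]
    rw [intervalIntegral_measureReal_Iic_smul_deriv P₁ hr' (fun x _ => hg x)
        (hg'.intervalIntegrable _ _),
      intervalIntegral_measureReal_Iic_smul_deriv P₂ hr' (fun x _ => hg x)
        (hg'.intervalIntegrable _ _)]
    abel
  have hlim := (hH_top.sub hH_bot).sub ((hg_lim P₁).sub (hg_lim P₂))
  rw [tendsto_nhds_unique (intervalIntegral_tendsto_integral hint tendsto_neg_atTop_atBot
    tendsto_id) (hlim.congr' (hparts.mono fun _ h => h.symm))]
  abel

end IntegrationByParts

open Complex

theorem norm_exp_neg_I_mul_mul (ω x : ℝ) : ‖exp (-(I * ω * x))‖ = 1 := by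
  rw [show -(I * ω * x) = ((-(ω * x) : ℝ) : ℂ) * I by push_cast; ring, norm_exp_ofReal_mul_I]

theorem integral_cdf_sub_cdf_mul_exp (P₁ P₂ : Measure ℝ) [IsProbabilityMeasure P₁]
    [IsProbabilityMeasure P₂] {ω : ℝ} (hω : ω ≠ 0)
    (hint : Integrable fun x : ℝ => ((cdf P₁ x - cdf P₂ x : ℝ) : ℂ) * exp (-(I * ω * x))) :
    ∫ x : ℝ, ((cdf P₁ x - cdf P₂ x : ℝ) : ℂ) * exp (-(I * ω * x))
      = (charFn P₁ (-ω) - charFn P₂ (-ω)) / (I * ω) := by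
  have hc : -(I * ω) ≠ 0 := neg_ne_zero.2 (mul_ne_zero I_ne_zero (ofReal_ne_zero.2 hω))
  have hg : ∀ x : ℝ, HasDerivAt (fun y : ℝ => exp (-(I * ω * y)) / -(I * ω))
      (exp (-(I * ω * x))) x := fun x => by
    have h := (((hasDerivAt_id (x : ℂ)).const_mul (-(I * ω))).comp_ofReal.cexp).div_const (-(I * ω))
    simp only [id_eq, mul_one, mul_div_cancel_right₀ _ hc] at h
    simpa only [neg_mul] using h
  have hP : ∀ (P : Measure ℝ) [IsProbabilityMeasure P],
      ∫ x, exp (-(I * ω * x)) / -(I * ω) ∂P = charFn P (-ω) / -(I * ω) := fun P _ => by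
    rw [integral_div, charFn]
    congr 2; ext x; push_cast; ring_nf
  have key := integral_cdf_sub_cdf_smul_deriv P₁ P₂ hg (by fun_prop)
    (C := ‖-(I * ω)‖⁻¹) (fun x => by rw [norm_div, norm_exp_neg_I_mul_mul, one_div])
    (by simpa only [real_smul] using hint)
  simp only [real_smul, hP] at key
  rw [key]
  field_simp
  ring

theorem cdfFn_eq_cdf (P : Measure ℝ) [IsProbabilityMeasure P] : cdfFn P = cdf P :=
  funext fun x => (cdf_eq_real P x).symm

/-- **Fourier transform of a CDF difference.**
If `H = F_{P₁} - F_{P₂}` is Lebesgue integrable, then for every `ω ≠ 0`,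
`∫ H(x) e^{-iωx} dx = (φ_{P₁}(-ω) - φ_{P₂}(-ω)) / (iω)`; equivalently, with the symmetric
Fourier convention, `Ĥ(ω) = (φ_{P₁}(-ω) - φ_{P₂}(-ω)) / (iω√(2π))`. -/
theorem fourier_cdf_difference
    (P₁ P₂ : Measure ℝ) [IsProbabilityMeasure P₁] [IsProbabilityMeasure P₂]
    (H : ℝ → ℝ) (hH : ∀ x, H x = cdfFn P₁ x - cdfFn P₂ x)
    (hInt : Integrable H (volume : Measure ℝ)) :
    ∀ ω : ℝ, ω ≠ 0 →
      (∫ x : ℝ, (H x : ℂ) * Complex.exp (-(Complex.I * (ω : ℂ) * (x : ℂ)))) =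
          (charFn P₁ (-ω) - charFn P₂ (-ω)) / (Complex.I * (ω : ℂ)) ∧
      ((Real.sqrt (2 * Real.pi) : ℂ))⁻¹ *
          (∫ x : ℝ, (H x : ℂ) * Complex.exp (-(Complex.I * (ω : ℂ) * (x : ℂ)))) =
          (charFn P₁ (-ω) - charFn P₂ (-ω)) /
            (Complex.I * (ω : ℂ) * (Real.sqrt (2 * Real.pi) : ℂ)) := by
  intro ω hω
  obtain rfl : H = fun x => cdf P₁ x - cdf P₂ x := by
    ext x; rw [hH, cdfFn_eq_cdf, cdfFn_eq_cdf]
  have hint := hInt.ofReal.mul_bdd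
    (by fun_prop : Continuous fun x : ℝ => exp (-(I * ω * x))).aestronglyMeasurable
    (ae_of_all _ fun x => (norm_exp_neg_I_mul_mul ω x).le)
  have h := integral_cdf_sub_cdf_mul_exp P₁ P₂ hω hint
  exact ⟨h, by rw [h, inv_mul_eq_div, div_div]⟩
end

section
/- Let P₁ and P₂ be probability measures on ℝ such that H = F_{P₁} − F_{P₂} lies in L¹(ℝ) ∩ L²(ℝ), and let Ĥ denote its Fourier transform in the symmetric convention. Then for every ε > 0, (1/(2π)) ∫_ℝ |φ_{P₁}(ω) − φ_{P₂}(ω)|² / (ω² + ε) dω = ∫_ℝ (ω² / (ω² + ε)) |Ĥ(ω)|² dω; that is, the regularised spectral Hilbert distance between the embeddings φ_{P_i} − 1 coincides with the regularised CDF-level Hilbert distance between F_{P₁} and F_{P₂}. -/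
/-!
Write `e_ω(t) = e^{iωt}`, so that `e_ω(b) - e_ω(c) = iω ∫_c^b e_ω`. For a probability measure `P`,
Fubini turns `iω ∫_{-n}^{n} F_P e_ω` into `e_ω(n) - ∫ e_ω(clamp_{[-n,n]} x) dP(x)`. The boundary
term `e_ω(n)` cancels in the difference of two probability measures, and as `n → ∞` we get
`φ_{P₁}(ω) - φ_{P₂}(ω) = -iω ∫ H e_ω` (the truncation is needed since `F_P` alone is not
integrable). Since `Ĥ(ω)` is `(2π)^{-1/2}` times the conjugate of `∫ H e_ω`, the two integrands
agree pointwise.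
-/

open MeasureTheory Filter

/-- The Fourier transform with the symmetric convention
`f̂(ω) = (1/√(2π)) ∫ f(x) e^{-iωx} dx`, for a real-valued function. -/
noncomputable def fourierSym (f : ℝ → ℝ) (ω : ℝ) : ℂ :=
  ((Real.sqrt (2 * Real.pi) : ℂ))⁻¹ *
    ∫ x : ℝ, (f x : ℂ) * Complex.exp (-(Complex.I * (ω : ℂ) * (x : ℂ)))

open Set Complex Topology ComplexConjugate

theorem intervalIntegral_cdfFn_smul {E : Type*} [NormedAddCommGroup E] [NormedSpace ℝ E]
    [CompleteSpace E] (P : Measure ℝ) [IsFiniteMeasure P] {f : ℝ → E} {a b : ℝ} (hab : a ≤ b)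
    (hf : IntervalIntegrable f volume a b) :
    ∫ t in a..b, cdfFn P t • f t = ∫ x, (∫ t in min (max a x) b..b, f t) ∂P := by
  have hcdf (t : ℝ) : cdfFn P t • f t = ∫ x, (Iic t).indicator (fun _ => f t) x ∂P :=
    (integral_indicator_const _ measurableSet_Iic).symm
  have hint : Integrable (Function.uncurry fun t x => (Iic t).indicator (fun _ => f t) x)
      ((volume.restrict (Ioc a b)).prod P) :=
    ((hf.1.comp_fst P).indicator (measurableSet_le measurable_snd measurable_fst)).congr
      (ae_of_all _ fun p => by simp [indicator, Function.uncurry])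
  have hclamp (x : ℝ) : Ioc a b ∩ Ioi x = Ioc (min (max a x) b) b := by
    rw [Ioc_inter_Ioi]
    rcases le_total (max a x) b with h | h
    · rw [min_eq_left h]
    · rw [min_eq_right h, Ioc_self, Ioc_eq_empty h.not_gt]
  have hinner (x : ℝ) : ∫ t in Ioc a b, (Iic t).indicator (fun _ => f t) x
      = ∫ t in min (max a x) b..b, f t := by
    rw [intervalIntegral.integral_of_le (min_le_right _ _), ← hclamp,
      setIntegral_congr_set ((ae_eq_refl _).inter Ioi_ae_eq_Ici),
      ← setIntegral_indicator measurableSet_Ici]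
    congr 1 with t
  simp_rw [intervalIntegral.integral_of_le hab, hcdf, integral_integral_swap hint, hinner]

theorem monotone_cdfFn (P : Measure ℝ) [IsFiniteMeasure P] : Monotone (cdfFn P) :=
  fun _ _ h => ENNReal.toReal_mono (measure_ne_top _ _) (measure_mono (Iic_subset_Iic.2 h))

theorem norm_cexp_I_mul_mul (ω t : ℝ) : ‖cexp (I * ω * t)‖ = 1 := by
  simpa [mul_assoc] using norm_exp_I_mul_ofReal (ω * t)

theorem I_mul_mul_intervalIntegral_cexp (ω a b : ℝ) :
    I * ω * ∫ t in a..b, cexp (I * ω * t) = cexp (I * ω * b) - cexp (I * ω * a) := by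
  rcases eq_or_ne ω 0 with rfl | hω
  · simp
  · have hIω : I * ω ≠ 0 := mul_ne_zero I_ne_zero (ofReal_ne_zero.2 hω)
    rw [integral_exp_mul_complex hIω, mul_div_cancel₀ _ hIω]

theorem I_mul_mul_intervalIntegral_cdfFn_smul_cexp (P : Measure ℝ) [IsProbabilityMeasure P]
    (ω : ℝ) {a b : ℝ} (hab : a ≤ b) :
    I * ω * ∫ t in a..b, cdfFn P t • cexp (I * ω * t)
      = cexp (I * ω * b) - ∫ x, cexp (I * ω * ↑(min (max a x) b)) ∂P := by
  have hcont : Continuous fun t : ℝ => cexp (I * ω * t) := by fun_prop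
  have hint : Integrable (fun x => cexp (I * ω * ↑(min (max a x) b))) P :=
    .of_bound (by fun_prop) 1 (ae_of_all _ fun x => (norm_cexp_I_mul_mul ω _).le)
  rw [intervalIntegral_cdfFn_smul P hab (hcont.intervalIntegrable a b), ← integral_const_mul]
  simp_rw [I_mul_mul_intervalIntegral_cexp]
  rw [integral_sub (integrable_const _) hint, integral_const, probReal_univ, one_smul]

theorem tendsto_integral_comp_clamp {E : Type*} [NormedAddCommGroup E] [NormedSpace ℝ E]
    (P : Measure ℝ) [IsFiniteMeasure P] {g : ℝ → E} (hg : Continuous g) {C : ℝ}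
    (hC : ∀ x, ‖g x‖ ≤ C) :
    Tendsto (fun n : ℕ => ∫ x, g (min (max (-n) x) n) ∂P) atTop (𝓝 (∫ x, g x ∂P)) := by
  refine tendsto_integral_of_dominated_convergence (fun _ => C) (fun n => by fun_prop)
    (integrable_const C) (fun n => ae_of_all _ fun x => hC _) (ae_of_all _ fun x => ?_)
  refine tendsto_const_nhds.congr' ?_
  filter_upwards [eventually_ge_atTop ⌈|x|⌉₊] with n hn
  have hx : |x| ≤ n := Nat.ceil_le.1 hn
  rw [max_eq_right (neg_le_of_abs_le hx), min_eq_left (le_of_abs_le hx)]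

theorem charFn_sub_charFn (P₁ P₂ : Measure ℝ) [IsProbabilityMeasure P₁] [IsProbabilityMeasure P₂]
    (hH : Integrable (fun t => cdfFn P₁ t - cdfFn P₂ t)) (ω : ℝ) :
    charFn P₁ ω - charFn P₂ ω
      = -(I * ω * ∫ t, (cdfFn P₁ t - cdfFn P₂ t) • cexp (I * ω * t)) := by
  have hcont : Continuous fun t : ℝ => cexp (I * ω * t) := by fun_prop
  have hint : Integrable fun t => (cdfFn P₁ t - cdfFn P₂ t) • cexp (I * ω * t) :=
    hH.smul_bdd 1 hcont.aestronglyMeasurable (ae_of_all _ fun t => (norm_cexp_I_mul_mul ω t).le)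
  have hsmul (P : Measure ℝ) [IsProbabilityMeasure P] (n : ℕ) :
      IntervalIntegrable (fun t => cdfFn P t • cexp (I * ω * t)) volume (-n) n :=
    (monotone_cdfFn P).intervalIntegrable.smul_continuousOn hcont.continuousOn
  have htrunc (n : ℕ) : I * ω * ∫ t in (-n : ℝ)..n, (cdfFn P₁ t - cdfFn P₂ t) • cexp (I * ω * t)
      = (∫ x, cexp (I * ω * ↑(min (max (-(n : ℝ)) x) n)) ∂P₂)
        - ∫ x, cexp (I * ω * ↑(min (max (-(n : ℝ)) x) n)) ∂P₁ := by
    have hn : (-n : ℝ) ≤ n := neg_le_self n.cast_nonneg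
    simp_rw [sub_smul]
    rw [intervalIntegral.integral_sub (hsmul P₁ n) (hsmul P₂ n), mul_sub,
      I_mul_mul_intervalIntegral_cdfFn_smul_cexp P₁ ω hn,
      I_mul_mul_intervalIntegral_cdfFn_smul_cexp P₂ ω hn]
    ring
  have hlim := ((intervalIntegral_tendsto_integral hint
    (tendsto_neg_atTop_atBot.comp tendsto_natCast_atTop_atTop)
    tendsto_natCast_atTop_atTop).const_mul (I * ω))
  simp_rw [Function.comp_apply, htrunc] at hlim
  have hcharFn (P : Measure ℝ) [IsProbabilityMeasure P] :
      Tendsto (fun n : ℕ => ∫ x, cexp (I * ω * ↑(min (max (-(n : ℝ)) x) n)) ∂P) atTop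
        (𝓝 (charFn P ω)) :=
    tendsto_integral_comp_clamp P hcont fun x => (norm_cexp_I_mul_mul ω x).le
  rw [tendsto_nhds_unique hlim ((hcharFn P₂).sub (hcharFn P₁))]
  ring

theorem norm_fourierSym (f : ℝ → ℝ) (ω : ℝ) :
    ‖fourierSym f ω‖ = ‖∫ t, f t • cexp (I * ω * t)‖ / √(2 * Real.pi) := by
  have hconj : ∫ t, (f t : ℂ) * cexp (-(I * ω * t)) = conj (∫ t, f t • cexp (I * ω * t)) := by
    rw [← integral_conj]
    congr 1 with t
    rw [real_smul, map_mul, conj_ofReal, ← exp_conj, map_mul, map_mul, conj_I, conj_ofReal,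
      conj_ofReal, neg_mul, neg_mul]
  rw [fourierSym, hconj, norm_mul, norm_conj, norm_inv, norm_real,
    Real.norm_of_nonneg (Real.sqrt_nonneg _), inv_mul_eq_div]

theorem regSpectral_eq_regCdf_general
    (P₁ P₂ : Measure ℝ) [IsProbabilityMeasure P₁] [IsProbabilityMeasure P₂]
    (H : ℝ → ℝ) (hH : ∀ x, H x = cdfFn P₁ x - cdfFn P₂ x)
    (hL1 : MemLp H 1 (volume : Measure ℝ)) :
    ∀ ε : ℝ, 0 < ε →
      (1 / (2 * Real.pi)) *
          (∫ ω : ℝ, (‖charFn P₁ ω - charFn P₂ ω‖) ^ 2 / (ω ^ 2 + ε)) =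
        ∫ ω : ℝ, (ω ^ 2 / (ω ^ 2 + ε)) * (‖fourierSym H ω‖) ^ 2 := by
  intro ε hε
  obtain rfl : H = fun x => cdfFn P₁ x - cdfFn P₂ x := funext hH
  rw [← integral_const_mul]
  congr 1 with ω
  rw [charFn_sub_charFn P₁ P₂ (memLp_one_iff_integrable.1 hL1), norm_fourierSym, norm_neg,
    norm_mul, norm_mul, norm_I, norm_real, one_mul, div_pow, mul_pow, Real.norm_eq_abs, sq_abs,
    Real.sq_sqrt Real.two_pi_pos.le]
  field_simp

/-- **Regularised spectral distance equals the regularised CDF-level distance.**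
If `H = F_{P₁} - F_{P₂} ∈ L¹(ℝ) ∩ L²(ℝ)`, then for every `ε > 0`,
`(1/(2π)) ∫ |φ_{P₁}(ω) - φ_{P₂}(ω)|² / (ω² + ε) dω = ∫ (ω²/(ω² + ε)) |Ĥ(ω)|² dω`. -/
theorem regSpectral_eq_regCdf
    (P₁ P₂ : Measure ℝ) [IsProbabilityMeasure P₁] [IsProbabilityMeasure P₂]
    (H : ℝ → ℝ) (hH : ∀ x, H x = cdfFn P₁ x - cdfFn P₂ x)
    (hL1 : MemLp H 1 (volume : Measure ℝ)) (hL2 : MemLp H 2 (volume : Measure ℝ)) :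
    ∀ ε : ℝ, 0 < ε →
      (1 / (2 * Real.pi)) *
          (∫ ω : ℝ, (‖charFn P₁ ω - charFn P₂ ω‖) ^ 2 / (ω ^ 2 + ε)) =
        ∫ ω : ℝ, (ω ^ 2 / (ω ^ 2 + ε)) * (‖fourierSym H ω‖) ^ 2 :=
  regSpectral_eq_regCdf_general P₁ P₂ H hH hL1
end

section
/- Let F be the CDF of a probability measure on ℝ with F − F_{δ₀} ∈ L²(ℝ), and let ρ be a probability measure on ℝ whose support is contained in a bounded interval [−R, R]. Then the translated CDF G(x) = ∫_ℝ F(x − r) dρ(r) also satisfies G − F_{δ₀} ∈ L²(ℝ); i.e. the class Γ_F of CDFs at finite Cramér distance from the Dirac measure at 0 is invariant under reward translation with almost surely bounded rewards. -/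
open MeasureTheory Filter

/-- The CDF of the Dirac measure at `0`: the indicator of `[0, ∞)`. -/
noncomputable def diracCdf (x : ℝ) : ℝ := if 0 ≤ x then 1 else 0

/-!
Since `ρ` is carried by `[-R, R]` and `F` is monotone, the translated CDF is squeezed between the
translates `F (· - R)` and `F (· + R)`. A translate of `F` stays at finite `L²` distance from
`F_{δ₀}`, because `F_{δ₀}` and its translate by `c` differ only on an interval of length `|c|`.
-/

variable {p : ENNReal}

theorem MeasureTheory.MemLp.of_le_of_le {α : Type*} [MeasurableSpace α] {μ : Measure α}
    {f g h : α → ℝ} (hf : MemLp f p μ) (hh : MemLp h p μ) (hg : AEStronglyMeasurable g μ)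
    (hfg : ∀ᵐ x ∂μ, f x ≤ g x) (hgh : ∀ᵐ x ∂μ, g x ≤ h x) : MemLp g p μ := by
  refine (hf.norm.add hh.norm).mono' hg ?_
  filter_upwards [hfg, hgh] with x hfgx hghx
  simp only [Real.norm_eq_abs, Pi.add_apply]
  exact abs_le.2 ⟨by linarith [neg_abs_le (f x), abs_nonneg (h x)],
    by linarith [le_abs_self (h x), abs_nonneg (f x)]⟩

theorem measurable_diracCdf : Measurable diracCdf :=
  Measurable.ite measurableSet_Ici measurable_const measurable_const

theorem diracCdf_mem_Icc (x : ℝ) : diracCdf x ∈ Set.Icc (0 : ℝ) 1 := by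
  unfold diracCdf; split_ifs <;> norm_num

theorem diracCdf_add_of_abs_lt_abs {x c : ℝ} (h : |c| < |x|) :
    diracCdf (x + c) = diracCdf x := by
  have hsign : 0 ≤ x + c ↔ 0 ≤ x := by
    constructor <;> intro <;> cases abs_cases c <;> cases abs_cases x <;> linarith
  simp only [diracCdf, hsign]

theorem abs_diracCdf_add_sub_le_indicator (x c : ℝ) :
    |diracCdf (x + c) - diracCdf x| ≤ (Set.Icc (-|c|) |c|).indicator (fun _ => 1) x := by
  by_cases hx : x ∈ Set.Icc (-|c|) |c|
  · have h₁ := diracCdf_mem_Icc (x + c)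
    have h₂ := diracCdf_mem_Icc x
    rw [Set.indicator_of_mem hx, abs_le]
    constructor <;> linarith [h₁.1, h₁.2, h₂.1, h₂.2]
  · rw [Set.indicator_of_notMem hx, diracCdf_add_of_abs_lt_abs (not_le.1 (hx ∘ abs_le.1)),
      sub_self, abs_zero]

theorem memLp_diracCdf_add_sub_diracCdf (c : ℝ) :
    MemLp (fun x => diracCdf (x + c) - diracCdf x) p volume := by
  have hbound : MemLp ((Set.Icc (-|c|) |c|).indicator fun _ => (1 : ℝ)) p volume :=
    memLp_indicator_const p measurableSet_Icc 1 (Or.inr measure_Icc_lt_top.ne)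
  refine hbound.mono
    ((measurable_diracCdf.comp (measurable_add_const c)).sub measurable_diracCdf).aestronglyMeasurable
    (Eventually.of_forall fun x => ?_)
  rw [Real.norm_eq_abs, Real.norm_eq_abs]
  exact (abs_diracCdf_add_sub_le_indicator x c).trans (le_abs_self _)

theorem MeasureTheory.MemLp.comp_add_sub_diracCdf {F : ℝ → ℝ}
    (hF : MemLp (fun x => F x - diracCdf x) p volume) (c : ℝ) :
    MemLp (fun x => F (x + c) - diracCdf x) p volume := by
  have htrans : MemLp (fun x => F (x + c) - diracCdf (x + c)) p volume :=
    hF.comp_measurePreserving (measurePreserving_add_right volume c)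
  convert htrans.add (memLp_diracCdf_add_sub_diracCdf c) using 1
  ext x
  simp only [Pi.add_apply]
  ring

namespace Monotone

variable {F : ℝ → ℝ} (hF : Monotone F) {ρ : Measure ℝ} {R : ℝ} (hρ : ρ (Set.Icc (-R) R)ᶜ = 0)
include hF hρ

theorem integrable_comp_sub [IsFiniteMeasure ρ] (x : ℝ) : Integrable (fun r => F (x - r)) ρ := by
  refine (integrable_const (|F (x - R)| + |F (x + R)|)).mono'
    (hF.measurable.comp (measurable_const.sub measurable_id)).aestronglyMeasurable ?_
  filter_upwards [mem_ae_iff.2 hρ] with r hr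
  have hlow : F (x - R) ≤ F (x - r) := hF (by linarith [hr.2])
  have hup : F (x - r) ≤ F (x + R) := hF (by linarith [hr.1])
  rw [Real.norm_eq_abs, abs_le]
  constructor <;> linarith [neg_abs_le (F (x - R)), le_abs_self (F (x + R)),
    abs_nonneg (F (x - R)), abs_nonneg (F (x + R))]

theorem monotone_integral_comp_sub [IsFiniteMeasure ρ] : Monotone (fun x => ∫ r, F (x - r) ∂ρ) :=
  fun _ _ hxy => integral_mono (hF.integrable_comp_sub hρ _) (hF.integrable_comp_sub hρ _)
    fun _ => hF (by linarith)

theorem le_integral_comp_sub [IsProbabilityMeasure ρ] (x : ℝ) :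
    F (x - R) ≤ ∫ r, F (x - r) ∂ρ := by
  simpa using integral_mono_ae (integrable_const (F (x - R))) (hF.integrable_comp_sub hρ x)
    (by filter_upwards [mem_ae_iff.2 hρ] with r hr using hF (by linarith [hr.2]))

theorem integral_comp_sub_le [IsProbabilityMeasure ρ] (x : ℝ) :
    ∫ r, F (x - r) ∂ρ ≤ F (x + R) := by
  simpa using integral_mono_ae (hF.integrable_comp_sub hρ x) (integrable_const (F (x + R)))
    (by filter_upwards [mem_ae_iff.2 hρ] with r hr using hF (by linarith [hr.1]))

end Monotone

/-- **Invariance of `Γ_F` under reward translation with bounded rewards.**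
Let `F` be the CDF of a probability measure `P` on `ℝ` with `F - F_{δ₀} ∈ L²(ℝ)`, and let `ρ`
be a probability measure supported in a bounded interval `[-R, R]`.  Then the translated CDF
`G(x) = ∫ F(x - r) dρ(r)` also satisfies `G - F_{δ₀} ∈ L²(ℝ)`. -/
theorem gammaF_invariant_reward_translation
    (P : Measure ℝ) [IsProbabilityMeasure P]
    (F : ℝ → ℝ) (hF : ∀ x, F x = (P (Set.Iic x)).toReal)
    (hL2 : MemLp (fun x => F x - diracCdf x) 2 (volume : Measure ℝ))
    (ρ : Measure ℝ) [IsProbabilityMeasure ρ]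
    (R : ℝ) (hρ : ρ (Set.Icc (-R) R)ᶜ = 0) :
    MemLp (fun x => (∫ r, F (x - r) ∂ρ) - diracCdf x) 2 (volume : Measure ℝ) := by
  have hmono : Monotone F := fun a b hab => by
    simp only [hF]
    exact ENNReal.toReal_mono (measure_ne_top P _) (measure_mono (Set.Iic_subset_Iic.2 hab))
  have hlow : MemLp (fun x => F (x - R) - diracCdf x) 2 volume := by
    simpa [sub_eq_add_neg] using hL2.comp_add_sub_diracCdf (-R)
  refine hlow.of_le_of_le (hL2.comp_add_sub_diracCdf R)
    ((hmono.monotone_integral_comp_sub hρ).measurable.sub measurable_diracCdf).aestronglyMeasurable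
    (Eventually.of_forall fun x => ?_) (Eventually.of_forall fun x => ?_)
  · exact sub_le_sub_right (hmono.le_integral_comp_sub hρ x) _
  · exact sub_le_sub_right (hmono.integral_comp_sub_le hρ x) _
end

section
/- Let α be a measurable space, κ a Markov kernel from α to α, γ ∈ (0,1), and s ↦ ρ_s a measurable assignment of probability measures on ℝ. Let C ≥ 0 and let F₁, F₂ : α × ℝ → ℝ be jointly measurable such that for every s ∈ α, F₁(s,·), F₂(s,·) are CDFs of probability measures with F₁(s,·) − F₂(s,·) ∈ L²(ℝ) and ‖F₁(s,·) − F₂(s,·)‖_{L²(ℝ)} ≤ C. Define the CDF Bellman update (T F)(s)(x) = ∫_α ∫_ℝ F(s', (x − r)/γ) dρ_s(r) dκ(s)(s'). Then for every s ∈ α, ‖(T F₁)(s) − (T F₂)(s)‖_{L²(ℝ)} ≤ √γ · C; i.e. the CDF Bellman operator is a √γ-contraction in the supremum Cramér metric over state indices. -/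
/-!
Both Bellman updates are expectations over the same pair `(s', r) ~ κ s ⊗ ρ s`, so their
difference is the expectation of `x ↦ G(s', (x - r)/γ)` with `G = F₁ - F₂`. By Jensen the
squared difference is at most the expectation of `|G(s', (x - r)/γ)|²`; integrating in `x` and
swapping the integrals (Tonelli), the substitution `y = (x - r)/γ` turns each inner integral into
`γ ‖G(s', ·)‖²_{L²} ≤ γ C²`.
-/

open MeasureTheory ProbabilityTheory Filter

/-- The CDF Bellman operator: `(T F)(s)(x) = ∫ ∫ F(s', (x - r)/γ) dρ_s(r) dκ(s)(s')`. -/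
noncomputable def bellmanCdf {α : Type*} [MeasurableSpace α]
    (κ : Kernel α α) (ρ : Kernel α ℝ) (γ : ℝ)
    (F : α → ℝ → ℝ) (s : α) (x : ℝ) : ℝ :=
  ∫ s', ∫ r, F s' ((x - r) / γ) ∂(ρ s) ∂(κ s)

open scoped ENNReal

lemma sq_eLpNorm_two {β E : Type*} [MeasurableSpace β] [NormedAddCommGroup E]
    (μ : Measure β) (f : β → E) :
    eLpNorm f 2 μ ^ 2 = ∫⁻ x, ‖f x‖ₑ ^ 2 ∂μ := by
  simpa using eLpNorm_nnreal_pow_eq_lintegral (μ := μ) (f := f) (p := 2) two_ne_zero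

lemma enorm_integral_sq_le {β E : Type*} [MeasurableSpace β] [NormedAddCommGroup E]
    [NormedSpace ℝ E] {μ : Measure β} [IsProbabilityMeasure μ] {f : β → E} (hf : AEStronglyMeasurable f μ) :
    ‖∫ p, f p ∂μ‖ₑ ^ 2 ≤ ∫⁻ p, ‖f p‖ₑ ^ 2 ∂μ := by
  rw [← sq_eLpNorm_two]
  gcongr
  calc ‖∫ p, f p ∂μ‖ₑ ≤ eLpNorm f 1 μ := by
        rw [eLpNorm_one_eq_lintegral_enorm]; exact enorm_integral_le_lintegral_enorm f
    _ ≤ eLpNorm f 2 μ := eLpNorm_le_eLpNorm_of_exponent_le one_le_two hf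

lemma lintegral_comp_sub_div {f : ℝ → ℝ≥0∞} (hf : Measurable f) {γ : ℝ} (hγ : 0 < γ) (r : ℝ) :
    ∫⁻ x, f ((x - r) / γ) = ENNReal.ofReal γ * ∫⁻ y, f y := by
  calc ∫⁻ x, f ((x - r) / γ) = ∫⁻ x, f (γ⁻¹ * x) := by
        simpa [div_eq_inv_mul] using lintegral_sub_right_eq_self (fun y => f (γ⁻¹ * y)) r
    _ = ∫⁻ y, f y ∂(Measure.map (γ⁻¹ * ·) volume) :=
        (lintegral_map hf (measurable_const_mul _)).symm
    _ = ENNReal.ofReal γ * ∫⁻ y, f y := by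
        rw [Real.map_volume_mul_left (inv_ne_zero hγ.ne'), inv_inv, lintegral_smul_measure,
          abs_of_pos hγ, smul_eq_mul]

lemma norm_le_one_of_eq_cdf {F : ℝ → ℝ}
    (hF : ∃ P : Measure ℝ, IsProbabilityMeasure P ∧ ∀ x, F x = (P (Set.Iic x)).toReal) (x : ℝ) :
    ‖F x‖ ≤ 1 := by
  obtain ⟨P, hP, hFP⟩ := hF
  rw [hFP, ← measureReal_def, Real.norm_of_nonneg measureReal_nonneg]
  exact measureReal_le_one

lemma ofReal_sqrt_mul_sq {γ : ℝ} (hγ : 0 ≤ γ) (C : ℝ) :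
    ENNReal.ofReal (Real.sqrt γ * C) ^ 2 = ENNReal.ofReal γ * ENNReal.ofReal C ^ 2 := by
  rw [ENNReal.ofReal_mul (Real.sqrt_nonneg γ), mul_pow, ← ENNReal.ofReal_pow (Real.sqrt_nonneg γ),
    Real.sq_sqrt hγ]

section ShiftedField

variable {α : Type*} [MeasurableSpace α] {F : α → ℝ → ℝ} {γ : ℝ}

lemma measurable_uncurry_comp_sub_div (hF : Measurable (Function.uncurry F)) :
    Measurable fun q : ℝ × (α × ℝ) => F q.2.1 ((q.1 - q.2.2) / γ) :=
  hF.comp (measurable_snd.fst.prodMk ((measurable_fst.sub measurable_snd.snd).div_const γ))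

lemma measurable_comp_sub_div (hF : Measurable (Function.uncurry F)) (x : ℝ) :
    Measurable fun p : α × ℝ => F p.1 ((x - p.2) / γ) :=
  (measurable_uncurry_comp_sub_div hF).comp measurable_prodMk_left

lemma integrable_comp_sub_div {μ : Measure (α × ℝ)} [IsFiniteMeasure μ]
    (hF : Measurable (Function.uncurry F)) {M : ℝ} (hM : ∀ s x, ‖F s x‖ ≤ M) (x : ℝ) :
    Integrable (fun p : α × ℝ => F p.1 ((x - p.2) / γ)) μ :=
  (integrable_const M).mono' (measurable_comp_sub_div hF x).aestronglyMeasurable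
    (ae_of_all _ fun _ => hM _ _)

lemma bellmanCdf_eq_integral_prod (κ : Kernel α α) [IsFiniteKernel κ]
    (ρ : Kernel α ℝ) [IsFiniteKernel ρ] (hF : Measurable (Function.uncurry F)) {M : ℝ}
    (hM : ∀ s x, ‖F s x‖ ≤ M) (s : α) (x : ℝ) :
    bellmanCdf κ ρ γ F s x = ∫ p, F p.1 ((x - p.2) / γ) ∂(κ s).prod (ρ s) :=
  integral_integral (integrable_comp_sub_div hF hM x)

end ShiftedField

lemma lintegral_sq_integral_comp_sub_div_le {α : Type*} [MeasurableSpace α]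
    {μ : Measure (α × ℝ)} [IsProbabilityMeasure μ] {G : α → ℝ → ℝ}
    (hG : Measurable (Function.uncurry G)) {γ : ℝ} (hγ : 0 < γ) {B : ℝ≥0∞}
    (hB : ∀ s, ∫⁻ y, ‖G s y‖ₑ ^ 2 ≤ B) :
    ∫⁻ x, ‖∫ p, G p.1 ((x - p.2) / γ) ∂μ‖ₑ ^ 2 ≤ ENNReal.ofReal γ * B := by
  have hslice (s : α) : Measurable fun y => ‖G s y‖ₑ ^ 2 :=
    (hG.comp measurable_prodMk_left).enorm.pow_const 2
  calc ∫⁻ x, ‖∫ p, G p.1 ((x - p.2) / γ) ∂μ‖ₑ ^ 2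
      ≤ ∫⁻ x, ∫⁻ p, ‖G p.1 ((x - p.2) / γ)‖ₑ ^ 2 ∂μ := lintegral_mono fun x =>
        enorm_integral_sq_le (measurable_comp_sub_div hG x).aestronglyMeasurable
    _ = ∫⁻ p, (∫⁻ x, ‖G p.1 ((x - p.2) / γ)‖ₑ ^ 2) ∂μ :=
        lintegral_lintegral_swap
          ((measurable_uncurry_comp_sub_div hG).enorm.pow_const 2).aemeasurable
    _ = ∫⁻ p, ENNReal.ofReal γ * (∫⁻ y, ‖G p.1 y‖ₑ ^ 2) ∂μ := by
        simp_rw [lintegral_comp_sub_div (hslice _) hγ]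
    _ ≤ ∫⁻ _, ENNReal.ofReal γ * B ∂μ := lintegral_mono fun p => by gcongr; exact hB p.1
    _ = ENNReal.ofReal γ * B := by simp

theorem bellmanCdf_contraction_general
    {α : Type*} [MeasurableSpace α]
    (κ : Kernel α α) [IsMarkovKernel κ]
    (ρ : Kernel α ℝ) [IsMarkovKernel ρ]
    (γ : ℝ) (hγ : γ ∈ Set.Ioo (0 : ℝ) 1)
    (C : ℝ)
    (F₁ F₂ : α → ℝ → ℝ)
    (hm₁ : Measurable (Function.uncurry F₁)) (hm₂ : Measurable (Function.uncurry F₂))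
    (hcdf₁ : ∀ s, ∃ P : Measure ℝ, IsProbabilityMeasure P ∧
      ∀ x, F₁ s x = (P (Set.Iic x)).toReal)
    (hcdf₂ : ∀ s, ∃ P : Measure ℝ, IsProbabilityMeasure P ∧
      ∀ x, F₂ s x = (P (Set.Iic x)).toReal)
    (hbound : ∀ s, eLpNorm (fun x => F₁ s x - F₂ s x) 2 volume ≤ ENNReal.ofReal C) :
    ∀ s, eLpNorm (fun x => bellmanCdf κ ρ γ F₁ s x - bellmanCdf κ ρ γ F₂ s x) 2 volume ≤
      ENNReal.ofReal (Real.sqrt γ * C) := by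
  intro s
  have hbd₁ (s x) : ‖F₁ s x‖ ≤ 1 := norm_le_one_of_eq_cdf (hcdf₁ s) x
  have hbd₂ (s x) : ‖F₂ s x‖ ≤ 1 := norm_le_one_of_eq_cdf (hcdf₂ s) x
  have hdiff (x : ℝ) : bellmanCdf κ ρ γ F₁ s x - bellmanCdf κ ρ γ F₂ s x =
      ∫ p, F₁ p.1 ((x - p.2) / γ) - F₂ p.1 ((x - p.2) / γ) ∂(κ s).prod (ρ s) := by
    rw [bellmanCdf_eq_integral_prod κ ρ hm₁ hbd₁, bellmanCdf_eq_integral_prod κ ρ hm₂ hbd₂,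
      integral_sub (integrable_comp_sub_div hm₁ hbd₁ x) (integrable_comp_sub_div hm₂ hbd₂ x)]
  rw [← ENNReal.pow_le_pow_left_iff two_ne_zero, sq_eLpNorm_two, ofReal_sqrt_mul_sq hγ.1.le]
  simp_rw [hdiff]
  refine lintegral_sq_integral_comp_sub_div_le (G := fun s x => F₁ s x - F₂ s x)
    (hm₁.sub hm₂) hγ.1 fun s' => ?_
  rw [← sq_eLpNorm_two]
  gcongr
  exact hbound s'

/-- **The CDF Bellman operator is a `√γ`-contraction in the supremum Cramér metric.**
If `F₁, F₂` are jointly measurable CDF fields whose pointwise L² (Cramér) distances are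
bounded by `C`, then for every state `s`,
`‖(T F₁)(s) - (T F₂)(s)‖_{L²} ≤ √γ · C`. -/
theorem bellmanCdf_contraction
    {α : Type*} [MeasurableSpace α]
    (κ : Kernel α α) [IsMarkovKernel κ]
    (ρ : Kernel α ℝ) [IsMarkovKernel ρ]
    (γ : ℝ) (hγ : γ ∈ Set.Ioo (0 : ℝ) 1)
    (C : ℝ) (hC : 0 ≤ C)
    (F₁ F₂ : α → ℝ → ℝ)
    (hm₁ : Measurable (Function.uncurry F₁)) (hm₂ : Measurable (Function.uncurry F₂))
    (hcdf₁ : ∀ s, ∃ P : Measure ℝ, IsProbabilityMeasure P ∧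
      ∀ x, F₁ s x = (P (Set.Iic x)).toReal)
    (hcdf₂ : ∀ s, ∃ P : Measure ℝ, IsProbabilityMeasure P ∧
      ∀ x, F₂ s x = (P (Set.Iic x)).toReal)
    (hL2 : ∀ s, MemLp (fun x => F₁ s x - F₂ s x) 2 (volume : Measure ℝ))
    (hbound : ∀ s, eLpNorm (fun x => F₁ s x - F₂ s x) 2 volume ≤ ENNReal.ofReal C) :
    ∀ s, eLpNorm (fun x => bellmanCdf κ ρ γ F₁ s x - bellmanCdf κ ρ γ F₂ s x) 2 volume ≤
      ENNReal.ofReal (Real.sqrt γ * C) :=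
  bellmanCdf_contraction_general κ ρ γ hγ C F₁ F₂ hm₁ hm₂ hcdf₁ hcdf₂ hbound
end

section
/- Let γ > 0, let ρ be a probability measure on ℝ, let m be a probability measure on a measurable space β, and let η be a Markov kernel from β to ℝ. Let μ be the pushforward of the product measure ρ ⊗ (m ⊗ η) on ℝ × (β × ℝ) under the map (r, (b, z)) ↦ r + γz. Then for every x ∈ ℝ, μ((−∞, x]) = ∫_ℝ ∫_β (η b)((−∞, (x − r)/γ]) dm(b) dρ(r); i.e. the CDF of the distributional Bellman update equals the expected rescaled-and-translated CDF of the successor return distributions. -/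
open MeasureTheory ProbabilityTheory Filter

/-- **CDF of the distributional Bellman update.**
Let `γ > 0`, `ρ` a probability measure on `ℝ` (rewards), `m` a probability measure on `β`
(successor pairs) and `η` a Markov kernel from `β` to `ℝ` (successor return laws).  Let `μ`
be the pushforward of `ρ ⊗ (m ⊗ η)` under `(r, (b, z)) ↦ r + γz`.  Then for every `x`,
`μ((-∞, x]) = ∫ ∫ η(b)((-∞, (x - r)/γ]) dm(b) dρ(r)`. -/
theorem bellman_update_cdf
    {β : Type*} [MeasurableSpace β]
    (γ : ℝ) (hγ : 0 < γ)
    (ρ : Measure ℝ) [IsProbabilityMeasure ρ]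
    (m : Measure β) [IsProbabilityMeasure m]
    (η : Kernel β ℝ) [IsMarkovKernel η]
    (μ : Measure ℝ)
    (hμ : μ = Measure.map (fun p : ℝ × β × ℝ => p.1 + γ * p.2.2)
      (ρ.prod (m.compProd η))) :
    ∀ x : ℝ, μ (Set.Iic x) =
      ∫⁻ r, ∫⁻ b, (η b) (Set.Iic ((x - r) / γ)) ∂m ∂ρ := by
  intro x
  subst hμ
  have hmeas : Measurable (fun p : ℝ × β × ℝ => p.1 + γ * p.2.2) := by
    fun_prop
  rw [Measure.map_apply hmeas measurableSet_Iic]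
  have hpre : (fun p : ℝ × β × ℝ => p.1 + γ * p.2.2) ⁻¹' Set.Iic x
      = {p : ℝ × β × ℝ | p.1 + γ * p.2.2 ≤ x} := rfl
  rw [hpre, Measure.prod_apply (by exact measurableSet_le (by fun_prop) (by fun_prop))]
  refine lintegral_congr fun r => ?_
  have : Prod.mk r ⁻¹' {p : ℝ × β × ℝ | p.1 + γ * p.2.2 ≤ x}
      = {q : β × ℝ | r + γ * q.2 ≤ x} := rfl
  rw [this, Measure.compProd_apply (by exact measurableSet_le (by fun_prop) (by fun_prop))]
  refine lintegral_congr fun b => ?_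
  congr 1
  ext z
  simp only [Set.mem_setOf_eq, Set.mem_Iic, Set.mem_preimage]
  rw [le_div_iff₀ hγ]
  constructor <;> intro h <;> linarith
end

section
/- The Cramér CDF space is complete: if (F_n) is a sequence of CDFs of probability measures on ℝ with F_n − F_{δ₀} ∈ L²(ℝ) for all n, and (F_n) is Cauchy in the L²(ℝ) distance, then there exists a function F : ℝ → ℝ that is nondecreasing, right-continuous, takes values in [0,1], satisfies F(x) → 0 as x → −∞ and F(x) → 1 as x → +∞ (hence is the CDF of a probability measure), satisfies F − F_{δ₀} ∈ L²(ℝ), and satisfies ‖F_n − F‖_{L²(ℝ)} → 0. -/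
open MeasureTheory Filter

/-! Subtracting `F_{δ₀}` turns `(Fₙ)` into a Cauchy sequence in `L²`; its limit `g` is the a.e.
limit of a subsequence, so `g + F_{δ₀}` agrees a.e. with the pointwise `limsup` of CDFs along
that subsequence, a monotone `[0, 1]`-valued function. Its right-continuous regularisation
changes it only at its countably many jumps, hence is still a.e. equal to `g + F_{δ₀}`. The
limits of this regularisation at `±∞` exist by monotonicity, and must be `0` and `1`: otherwise
it would stay away from `F_{δ₀}` on a half-line, contradicting square integrability. -/

open Set Topology ProbabilityTheory
open scoped ENNReal

namespace MeasureTheory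

variable {α E : Type*} [MeasurableSpace α] {μ : Measure α} [NormedAddCommGroup E] {p : ℝ≥0∞}

theorem exists_memLp_tendsto_eLpNorm_of_cauchy [CompleteSpace E] [Fact (1 ≤ p)]
    {f : ℕ → α → E} (hf : ∀ n, MemLp (f n) p μ)
    (hcauchy : ∀ ε : ℝ, 0 < ε → ∃ N : ℕ, ∀ n ≥ N, ∀ m ≥ N,
      eLpNorm (f n - f m) p μ ≤ ENNReal.ofReal ε) :
    ∃ g, MemLp g p μ ∧ Tendsto (fun n => eLpNorm (f n - g) p μ) atTop (𝓝 0) := by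
  have hcs : CauchySeq fun n => (hf n).toLp (f n) := by
    refine Metric.cauchySeq_iff.2 fun ε hε => ?_
    obtain ⟨N, hN⟩ := hcauchy (ε / 2) (half_pos hε)
    refine ⟨N, fun n hn m hm => ?_⟩
    rw [Lp.dist_edist, Lp.edist_toLp_toLp]
    exact (ENNReal.toReal_le_of_le_ofReal (half_pos hε).le (hN n hn m hm)).trans_lt
      (half_lt_self hε)
  obtain ⟨g, hg⟩ := cauchySeq_tendsto_of_complete hcs
  refine ⟨g, Lp.memLp g, ?_⟩
  rwa [← Lp.toLp_coeFn g (Lp.memLp g), Lp.tendsto_Lp_iff_tendsto_eLpNorm''] at hg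

theorem MemLp.eq_zero_of_tendsto {f : α → E} {l : Filter α} {c : E} (hf : MemLp f p μ)
    (hp0 : p ≠ 0) (hp : p ≠ ∞) (hl : ∀ s ∈ l, μ s = ∞) (hfc : Tendsto f l (𝓝 c)) :
    c = 0 := by
  by_contra hc
  have hc' : 0 < ‖c‖₊ / 2 := half_pos (nnnorm_pos.2 hc)
  have hlarge : {x | ‖c‖₊ / 2 ≤ ‖f x‖₊} ∈ l :=
    (hfc.nnnorm.eventually (lt_mem_nhds (half_lt_self (nnnorm_pos.2 hc)))).mono fun _ => le_of_lt
  exact (hf.meas_ge_lt_top hp0 hp hc'.ne').ne (hl _ hlarge)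

theorem MemLp.eq_of_tendsto_of_tendsto {f g : α → E} {l : Filter α} {a b : E}
    (hfg : MemLp (f - g) p μ) (hp0 : p ≠ 0) (hp : p ≠ ∞) (hl : ∀ s ∈ l, μ s = ∞)
    (hf : Tendsto f l (𝓝 a)) (hg : Tendsto g l (𝓝 b)) : a = b :=
  sub_eq_zero.1 (hfg.eq_zero_of_tendsto hp0 hp hl (hf.sub hg))

end MeasureTheory

theorem Real.volume_eq_top_of_mem_atTop {s : Set ℝ} (hs : s ∈ atTop) : volume s = ∞ := by
  obtain ⟨a, ha⟩ := mem_atTop_sets.1 hs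
  exact measure_mono_top (fun x hx => ha x hx) Real.volume_Ici

theorem Real.volume_eq_top_of_mem_atBot {s : Set ℝ} (hs : s ∈ atBot) : volume s = ∞ := by
  obtain ⟨a, ha⟩ := mem_atBot_sets.1 hs
  exact measure_mono_top (fun x hx => ha x hx) Real.volume_Iic

theorem limsup_mem_Icc {ι : Type*} {l : Filter ι} [l.NeBot] {u : ι → ℝ} {a b : ℝ}
    (hu : ∀ i, u i ∈ Icc a b) : limsup u l ∈ Icc a b :=
  ⟨le_limsup_of_le (isBoundedUnder_of ⟨b, fun i => (hu i).2⟩) fun _ hc =>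
      let ⟨i, hi⟩ := hc.exists; (hu i).1.trans hi,
    limsup_le_of_le (isBoundedUnder_of ⟨a, fun i => (hu i).1⟩).isCoboundedUnder_le
      (Eventually.of_forall fun i => (hu i).2)⟩

theorem monotone_limsup_of_monotone {ι α : Type*} [Preorder α] {l : Filter ι} [l.NeBot]
    {f : ι → α → ℝ} {a b : ℝ} (hmono : ∀ i, Monotone (f i)) (hbdd : ∀ i x, f i x ∈ Icc a b) :
    Monotone fun x => limsup (fun i => f i x) l := fun x y hxy =>
  limsup_le_limsup (Eventually.of_forall fun i => hmono i hxy)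
    (isBoundedUnder_of ⟨a, fun i => (hbdd i x).1⟩).isCoboundedUnder_le
    (isBoundedUnder_of ⟨b, fun i => (hbdd i y).2⟩)

theorem Monotone.stieltjesFunction_ae_eq {f : ℝ → ℝ} (hf : Monotone f) (μ : Measure ℝ)
    [NullSingletonClass μ] : hf.stieltjesFunction =ᵐ[μ] f := by
  filter_upwards [measure_eq_zero_iff_ae_notMem.1 (hf.countable_not_continuousAt.measure_zero μ)]
    with x hx
  exact (not_not.1 hx).continuousWithinAt.rightLim_eq

theorem Monotone.stieltjesFunction_mem_Icc {f : ℝ → ℝ} {a b : ℝ} (hf : Monotone f)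
    (hbdd : ∀ x, f x ∈ Icc a b) (x : ℝ) : hf.stieltjesFunction x ∈ Icc a b :=
  ⟨(hbdd x).1.trans (hf.le_rightLim le_rfl), (hf.rightLim_le (lt_add_one x)).trans (hbdd _).2⟩

theorem exists_stieltjesFunction_ae_eq_of_tendsto {ι : Type*} {l : Filter ι} [l.NeBot]
    {f : ι → ℝ → ℝ} {a b : ℝ} {h : ℝ → ℝ} {μ : Measure ℝ} [NullSingletonClass μ]
    (hmono : ∀ i, Monotone (f i)) (hbdd : ∀ i x, f i x ∈ Icc a b)
    (hlim : ∀ᵐ x ∂μ, Tendsto (fun i => f i x) l (𝓝 (h x))) :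
    ∃ G : StieltjesFunction ℝ, (∀ x, G x ∈ Icc a b) ∧ G =ᵐ[μ] h := by
  have hH := monotone_limsup_of_monotone (l := l) hmono hbdd
  refine ⟨hH.stieltjesFunction,
    hH.stieltjesFunction_mem_Icc fun x => limsup_mem_Icc fun i => hbdd i x, ?_⟩
  filter_upwards [hH.stieltjesFunction_ae_eq μ, hlim] with x hx hxlim
  rw [hx, hxlim.limsup_eq]

theorem tendsto_diracCdf_atTop : Tendsto diracCdf atTop (𝓝 1) :=
  tendsto_const_nhds.congr' <| (eventually_ge_atTop 0).mono fun _ hx => (if_pos hx).symm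

theorem tendsto_diracCdf_atBot : Tendsto diracCdf atBot (𝓝 0) :=
  tendsto_const_nhds.congr' <| (eventually_lt_atBot 0).mono fun _ hx => (if_neg hx.not_ge).symm

/-- **Completeness of the Cramér CDF space.**
If `(Fₙ)` is a sequence of CDFs of probability measures on `ℝ` with `Fₙ - F_{δ₀} ∈ L²(ℝ)`
for all `n`, Cauchy in the L²(ℝ) distance, then there exists `F : ℝ → ℝ` nondecreasing,
right-continuous, with values in `[0,1]`, tending to `0` at `-∞` and `1` at `+∞`
(hence the CDF of a probability measure), with `F - F_{δ₀} ∈ L²(ℝ)` and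
`‖Fₙ - F‖_{L²} → 0`. -/
theorem cramer_cdf_space_complete
    (F : ℕ → ℝ → ℝ)
    (hcdf : ∀ n, ∃ P : Measure ℝ, IsProbabilityMeasure P ∧
      ∀ x, F n x = (P (Set.Iic x)).toReal)
    (hL2 : ∀ n, MemLp (fun x => F n x - diracCdf x) 2 (volume : Measure ℝ))
    (hcauchy : ∀ ε : ℝ, 0 < ε → ∃ N : ℕ, ∀ n ≥ N, ∀ m ≥ N,
      eLpNorm (fun x => F n x - F m x) 2 volume ≤ ENNReal.ofReal ε) :
    ∃ Flim : ℝ → ℝ,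
      Monotone Flim ∧
      (∀ x, ContinuousWithinAt Flim (Set.Ici x) x) ∧
      (∀ x, Flim x ∈ Set.Icc (0 : ℝ) 1) ∧
      Tendsto Flim atBot (nhds 0) ∧
      Tendsto Flim atTop (nhds 1) ∧
      MemLp (fun x => Flim x - diracCdf x) 2 (volume : Measure ℝ) ∧
      Tendsto (fun n => eLpNorm (fun x => F n x - Flim x) 2 volume) atTop (nhds 0) := by
  choose P hP hFP using hcdf
  have hF : ∀ n, F n = cdf (P n) := fun n => funext fun x => by
    have := hP n
    rw [hFP, cdf_eq_real, measureReal_def]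
  set G : ℕ → ℝ → ℝ := fun n x => F n x - diracCdf x
  have hGcauchy : ∀ ε : ℝ, 0 < ε → ∃ N : ℕ, ∀ n ≥ N, ∀ m ≥ N,
      eLpNorm (G n - G m) 2 volume ≤ ENNReal.ofReal ε := by
    simpa only [G, Pi.sub_def, sub_sub_sub_cancel_right] using hcauchy
  obtain ⟨g, hg, hGg⟩ := exists_memLp_tendsto_eLpNorm_of_cauchy hL2 hGcauchy
  obtain ⟨ns, -, hns⟩ := (tendstoInMeasure_of_tendsto_eLpNorm two_ne_zero
    (fun n => (hL2 n).aestronglyMeasurable) hg.aestronglyMeasurable hGg).exists_seq_tendsto_ae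
  obtain ⟨Flim, hFlim_mem, hFlim⟩ := exists_stieltjesFunction_ae_eq_of_tendsto
    (f := fun k => F (ns k)) (h := g + diracCdf)
    (fun k => by rw [hF]; exact monotone_cdf _)
    (fun k x => by rw [hF]; exact ⟨cdf_nonneg _ x, cdf_le_one _ x⟩)
    (by filter_upwards [hns] with x hx; simpa [G] using hx.add_const (diracCdf x))
  have hFlimg : (fun x => Flim x - diracCdf x) =ᵐ[volume] g := by
    filter_upwards [hFlim] with x hx
    simp [hx]
  have hmemLp : MemLp (fun x => Flim x - diracCdf x) 2 volume := (memLp_congr_ae hFlimg).2 hg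
  have hlim_eq {l : Filter ℝ} (hl : ∀ s ∈ l, volume s = ∞) {a b : ℝ}
      (ha : Tendsto Flim l (𝓝 a)) (hb : Tendsto diracCdf l (𝓝 b)) : a = b :=
    hmemLp.eq_of_tendsto_of_tendsto (f := Flim) two_ne_zero ENNReal.ofNat_ne_top hl ha hb
  have hbot := tendsto_atBot_ciInf Flim.mono ⟨0, forall_mem_range.2 fun x => (hFlim_mem x).1⟩
  have htop := tendsto_atTop_ciSup Flim.mono ⟨1, forall_mem_range.2 fun x => (hFlim_mem x).2⟩
  refine ⟨Flim, Flim.mono, Flim.right_continuous, hFlim_mem, ?_, ?_, hmemLp, ?_⟩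
  · rwa [hlim_eq (fun _ => Real.volume_eq_top_of_mem_atBot) hbot tendsto_diracCdf_atBot] at hbot
  · rwa [hlim_eq (fun _ => Real.volume_eq_top_of_mem_atTop) htop tendsto_diracCdf_atTop] at htop
  · refine hGg.congr fun n => eLpNorm_congr_ae ?_
    filter_upwards [hFlimg] with x hx
    simp [← hx]
end
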